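/- For all k₁, k₂ ∈ {0,…,p−1} and all k₁′, k₂′ ∈ {0,…,p−1}: θ_{k₁}(k₁′, k₂) · θ_{k₁}([k₁′+k₂]_p, [p−k₁′]_p) · θ_{k₂}(k₂′, k₁) · θ_{k₂}([k₂′+k₁]_p, [p−k₂′]_p) = θ_{k₁}([p−k₁′]_p, k₁′) · θ_{k₂}([p−k₂′]_p, k₂′). (Hence the θ-normalization factor appearing in the S-matrix formula for the twisted Drinfeld doubles of ℤ_q ⋊ ℤ_p is identically 1.) -/
import Mathlib


/-- The 2-cochain `θ_k(i₁,i₂)` governing the projective representations of the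
centralizers `ℤ/pℤ` in the Mignard–Schauenburg categories:
`θ_k(i₁,i₂) = exp(2πi u k / p)` if `i₁ + i₂ ≥ p`, and `θ_k(i₁,i₂) = 1` otherwise. -/
noncomputable def thetaMS (p : ℕ) (u k : ℤ) (i₁ i₂ : ℕ) : ℂ :=
  if i₁ + i₂ < p then 1 else Complex.exp (2 * Real.pi * Complex.I * u * k / p)

lemma theta_pair (p : ℕ) (hp : 0 < p) (u k : ℤ) (k' m : ℕ) (hk' : k' < p) (hm : m < p) :
    thetaMS p u k k' m * thetaMS p u k ((k' + m) % p) ((p - k') % p) =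
      thetaMS p u k ((p - k') % p) k' := by
  unfold thetaMS
  rcases Nat.eq_zero_or_pos k' with h0 | h0
  · subst h0
    simp [Nat.mod_self, Nat.mod_eq_of_lt hm, hm, hp]
  · have hpk' : (p - k') % p = p - k' := Nat.mod_eq_of_lt (by omega)
    rcases lt_or_ge (k' + m) p with h | h
    · have hmod : (k' + m) % p = k' + m := Nat.mod_eq_of_lt h
      rw [hmod, hpk', if_pos h, if_neg (by omega), if_neg (by omega), one_mul]
    · have hmod : (k' + m) % p = k' + m - p := by
        rw [Nat.mod_eq_sub_mod h, Nat.mod_eq_of_lt (by omega)]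
      rw [hmod, hpk', if_neg (by omega), if_pos (by omega), if_neg (by omega), mul_one]

/-- For all `k₁, k₂, k₁′, k₂′ ∈ {0,…,p−1}`:
`θ_{k₁}(k₁′,k₂) · θ_{k₁}([k₁′+k₂]_p, [p−k₁′]_p) · θ_{k₂}(k₂′,k₁) · θ_{k₂}([k₂′+k₁]_p, [p−k₂′]_p)
  = θ_{k₁}([p−k₁′]_p, k₁′) · θ_{k₂}([p−k₂′]_p, k₂′)`.
Hence the θ-normalization factor appearing in the S-matrix formula for the twisted
Drinfeld doubles of `ℤ_q ⋊ ℤ_p` is identically `1`. -/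
theorem theta_normalization_trivial (p : ℕ) (hp : p.Prime) (hodd : Odd p) (u : ℤ) :
    ∀ k₁ k₂ k₁' k₂' : ℕ, k₁ < p → k₂ < p → k₁' < p → k₂' < p →
      thetaMS p u k₁ k₁' k₂ *
        thetaMS p u k₁ ((k₁' + k₂) % p) ((p - k₁') % p) *
        thetaMS p u k₂ k₂' k₁ *
        thetaMS p u k₂ ((k₂' + k₁) % p) ((p - k₂') % p) =
      thetaMS p u k₁ ((p - k₁') % p) k₁' * thetaMS p u k₂ ((p - k₂') % p) k₂' := by
  intro k₁ k₂ k₁' k₂' hk₁ hk₂ hk₁' hk₂'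
  have h1 := theta_pair p hp.pos u k₁ k₁' k₂ hk₁' hk₂
  have h2 := theta_pair p hp.pos u k₂ k₂' k₁ hk₂' hk₁
  calc thetaMS p u k₁ k₁' k₂ * thetaMS p u k₁ ((k₁' + k₂) % p) ((p - k₁') % p) *
        thetaMS p u k₂ k₂' k₁ * thetaMS p u k₂ ((k₂' + k₁) % p) ((p - k₂') % p)
      = (thetaMS p u k₁ k₁' k₂ * thetaMS p u k₁ ((k₁' + k₂) % p) ((p - k₁') % p)) *
        (thetaMS p u k₂ k₂' k₁ * thetaMS p u k₂ ((k₂' + k₁) % p) ((p - k₂') % p)) := by ring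
    _ = thetaMS p u k₁ ((p - k₁') % p) k₁' * thetaMS p u k₂ ((p - k₂') % p) k₂' := by
        rw [h1, h2]
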